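/- For any X ∈ S^n, writing HXH in block form as [[X̃_{11}, x̃],[x̃^T, x̃_0]] with X̃_{11} ∈ S^{n-1}, we have JXJ = H · [[X̃_{11}, 0],[0,0]] · H, where H is the Householder matrix with u = (1,...,1,√n+1)^T and J the centering matrix. -/

import Mathlib

open Matrix

/-- The centering matrix `J = I - (1/n) 𝟙𝟙ᵀ` (of size `n+1`). -/
noncomputable def centerJ (n : ℕ) : Matrix (Fin (n + 1)) (Fin (n + 1)) ℝ :=
  1 - ((n + 1 : ℝ))⁻¹ • Matrix.of (fun _ _ => (1 : ℝ))

/-- The vector `u = (1,…,1,√(n+1)+1)ᵀ`. -/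
noncomputable def uvec (n : ℕ) : Fin (n + 1) → ℝ :=
  fun i => if i = Fin.last n then Real.sqrt (n + 1) + 1 else 1

/-- The Householder matrix `H = I - (2/(uᵀu)) u uᵀ`. -/
noncomputable def householderH (n : ℕ) : Matrix (Fin (n + 1)) (Fin (n + 1)) ℝ :=
  1 - (2 / (uvec n ⬝ᵥ uvec n)) • Matrix.vecMulVec (uvec n) (uvec n)

/-!
`H` is the Householder reflection exchanging `𝟙` and `-√(n+1) eₙ`, two vectors of length
`√(n+1)` whose difference is `u`. Hence `H eₙ = -𝟙 / √(n+1)` and `H eₙeₙᵀ H = 𝟙𝟙ᵀ / (n+1)`,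
so `H (I - eₙeₙᵀ) H = J`. Zeroing the last row and column of `HXH` is conjugation by
`I - eₙeₙᵀ`, and the claim follows from `H² = I`.
-/

namespace Matrix

variable {ι R K : Type*} [Fintype ι]

theorem conj_vecMulVec_self [CommSemiring R] (M : Matrix ι ι R) (x : ι → R) :
    M * vecMulVec x x * Mᵀ = vecMulVec (M *ᵥ x) (M *ᵥ x) := by
  rw [mul_vecMulVec, vecMulVec_mul, vecMul_transpose]

variable [DecidableEq ι]

theorem of_ite_ne_and_ne_eq [Ring R] (k : ι) (Y : Matrix ι ι R) :
    of (fun i j => if i ≠ k ∧ j ≠ k then Y i j else 0) =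
      (1 - vecMulVec (Pi.single k 1) (Pi.single k 1)) * Y *
        (1 - vecMulVec (Pi.single k 1) (Pi.single k 1)) := by
  ext i j
  by_cases hi : i = k <;> by_cases hj : j = k <;>
    simp [hi, hj, sub_mul, mul_sub, mul_vecMulVec, vecMulVec_mul, vecMulVec_apply]

variable [Field K]

def householder (u : ι → K) : Matrix ι ι K :=
  1 - (2 / (u ⬝ᵥ u)) • vecMulVec u u

theorem householder_transpose (u : ι → K) : (householder u)ᵀ = householder u := by
  simp [householder, transpose_sub]

theorem householder_mulVec (u v : ι → K) :
    householder u *ᵥ v = v - (2 / (u ⬝ᵥ u) * (u ⬝ᵥ v)) • u := by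
  simp [householder, sub_mulVec, smul_mulVec, vecMulVec_mulVec, smul_smul, mul_comm]

theorem householder_mul_self {u : ι → K} (hu : u ⬝ᵥ u ≠ 0) :
    householder u * householder u = 1 := by
  have : 2 / (u ⬝ᵥ u) * (2 / (u ⬝ᵥ u) * (u ⬝ᵥ u)) = 2 / (u ⬝ᵥ u) + 2 / (u ⬝ᵥ u) := by
    field_simp; ring
  simp only [householder, sub_mul, mul_sub, one_mul, mul_one, smul_mul, Matrix.mul_smul,
    vecMulVec_mul_vecMulVec, vecMulVec_smul, smul_smul, this, add_smul]
  abel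

theorem householder_sub_mulVec {v w : ι → K} (hvw : v ⬝ᵥ v = w ⬝ᵥ w)
    (hu : (v - w) ⬝ᵥ (v - w) ≠ 0) : householder (v - w) *ᵥ v = w := by
  have : 2 / ((v - w) ⬝ᵥ (v - w)) * ((v - w) ⬝ᵥ v) = 1 := by
    rw [div_mul_eq_mul_div, div_eq_one_iff_eq hu]
    simp only [sub_dotProduct, dotProduct_sub, dotProduct_comm w v, hvw]
    ring
  rw [householder_mulVec, this, one_smul, sub_sub_cancel]

end Matrix

theorem householderH_eq_householder (n : ℕ) : householderH n = householder (uvec n) := rfl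

theorem uvec_eq_sub (n : ℕ) :
    uvec n = 1 - (-√(n + 1) : ℝ) • Pi.single (Fin.last n) 1 := by
  ext i
  by_cases hi : i = Fin.last n <;> simp [uvec, hi, add_comm]

theorem uvec_dotProduct_self_ne_zero (n : ℕ) : uvec n ⬝ᵥ uvec n ≠ 0 := by
  refine dotProduct_self_eq_zero.not.mpr fun h => ?_
  have hlast : 0 < uvec n (Fin.last n) := by simp only [uvec]; positivity
  simp [h] at hlast

theorem householderH_mulVec_one (n : ℕ) :
    householderH n *ᵥ 1 = (-√(n + 1) : ℝ) • Pi.single (Fin.last n) 1 := by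
  rw [householderH_eq_householder, uvec_eq_sub]
  refine householder_sub_mulVec ?_ (uvec_eq_sub n ▸ uvec_dotProduct_self_ne_zero n)
  simp [Real.mul_self_sqrt (by positivity : (0 : ℝ) ≤ n + 1)]

theorem householderH_mulVec_single_last (n : ℕ) :
    householderH n *ᵥ Pi.single (Fin.last n) 1 = (-√(n + 1) : ℝ)⁻¹ • 1 := by
  have hs : (-√(n + 1) : ℝ) ≠ 0 := by simp; positivity
  have hinv : householderH n *ᵥ ((-√(n + 1) : ℝ) • Pi.single (Fin.last n) 1) = 1 := by
    rw [← householderH_mulVec_one, mulVec_mulVec, householderH_eq_householder,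
      householder_mul_self (uvec_dotProduct_self_ne_zero n), one_mulVec]
  rw [← hinv, mulVec_smul, smul_smul, inv_mul_cancel₀ hs, one_smul]

theorem householderH_conj_vecMulVec_single_last (n : ℕ) :
    householderH n * vecMulVec (Pi.single (Fin.last n) 1) (Pi.single (Fin.last n) 1) *
      householderH n = ((n + 1 : ℝ))⁻¹ • of (fun _ _ => (1 : ℝ)) := by
  have hsymm : householderH n = (householderH n)ᵀ := (householder_transpose (uvec n)).symm
  nth_rewrite 2 [hsymm]
  rw [conj_vecMulVec_self, householderH_mulVec_single_last]
  ext i j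
  simp [← mul_inv, Real.mul_self_sqrt (by positivity : (0 : ℝ) ≤ n + 1)]

theorem householderH_conj_eq_centerJ (n : ℕ) :
    householderH n * (1 - vecMulVec (Pi.single (Fin.last n) 1) (Pi.single (Fin.last n) 1)) *
      householderH n = centerJ n := by
  rw [mul_sub, mul_one, sub_mul, householderH_eq_householder,
    householder_mul_self (uvec_dotProduct_self_ne_zero n), ← householderH_eq_householder,
    householderH_conj_vecMulVec_single_last, centerJ]

theorem centerJ_conj_eq_block_general (n : ℕ)
    (X : Matrix (Fin (n + 1)) (Fin (n + 1)) ℝ) :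
    centerJ n * X * centerJ n =
      householderH n *
        Matrix.of (fun i j : Fin (n + 1) =>
          if i ≠ Fin.last n ∧ j ≠ Fin.last n then
            (householderH n * X * householderH n) i j else 0) *
        householderH n := by
  rw [of_ite_ne_and_ne_eq, ← householderH_conj_eq_centerJ]
  simp only [Matrix.mul_assoc]

/-- Writing `HXH` in block form `[[X̃₁₁, x̃],[x̃ᵀ, x̃₀]]`, one has
`JXJ = H · [[X̃₁₁, 0],[0,0]] · H`. -/
theorem centerJ_conj_eq_block (n : ℕ)
    (X : Matrix (Fin (n + 1)) (Fin (n + 1)) ℝ) (hX : X.IsSymm) :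
    centerJ n * X * centerJ n =
      householderH n *
        Matrix.of (fun i j : Fin (n + 1) =>
          if i ≠ Fin.last n ∧ j ≠ Fin.last n then
            (householderH n * X * householderH n) i j else 0) *
        householderH n :=
  centerJ_conj_eq_block_general n X
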